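/- Fix x₀ ∈ ℙ¹(ℚ). A group homomorphism h : Γ₀(N) → ℚ is of the form h(γ) = Φ([γ⁻¹·x₀] − [x₀]) for some additive, Γ₀(N)-invariant map Φ : Δ₀ → ℚ if and only if h vanishes on the stabilizer in Γ₀(N) of every point of ℙ¹(ℚ). -/

import Mathlib

/-! Setup: `Γ₀(N) ≤ SL(2, ℤ)` acts on `ℙ¹(ℚ)`; `Δ = ℤ[ℙ¹(ℚ)]`, `Δ₀` the degree-zero divisors. -/

noncomputable section

/-- The projective line over `ℚ`, i.e. the projectivization of `ℚ²`. -/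
abbrev P1 : Type := Projectivization ℚ (Fin 2 → ℚ)

/-- The action of `SL(2, ℤ)` on `ℙ¹(ℚ)`, via the linear action of `SL(2, ℚ)` on `ℚ²`. -/
def smulP1 (g : Matrix.SpecialLinearGroup (Fin 2) ℤ) (x : P1) : P1 :=
  Projectivization.map
    ((Matrix.SpecialLinearGroup.toLin'
        (Matrix.SpecialLinearGroup.map (Int.castRingHom ℚ) g)) : (Fin 2 → ℚ) →ₗ[ℚ] (Fin 2 → ℚ))
    (LinearEquiv.injective _) x

/-- The degree of a divisor on `ℙ¹(ℚ)`: the sum of its coefficients. -/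
def degMap : (P1 →₀ ℤ) →+ ℤ := Finsupp.liftAddHom fun _ => AddMonoidHom.id ℤ

/-- `Δ₀`: the subgroup of divisors of degree `0`. -/
def Delta0 : AddSubgroup (P1 →₀ ℤ) := degMap.ker

lemma degMap_mapDomain (f : P1 → P1) (d : P1 →₀ ℤ) :
    degMap (Finsupp.mapDomain f d) = degMap d := by
  classical
  simp only [degMap, Finsupp.liftAddHom_apply]
  exact Finsupp.sum_mapDomain_index_addMonoidHom (h := fun _ => AddMonoidHom.id ℤ)

/-- The action of `SL(2, ℤ)` on degree-zero divisors on `ℙ¹(ℚ)`. -/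
def smulDelta0 (g : Matrix.SpecialLinearGroup (Fin 2) ℤ) (d : ↥Delta0) : ↥Delta0 :=
  ⟨Finsupp.mapDomain (smulP1 g) d.1, by
    have hd := d.2
    simp only [Delta0, AddMonoidHom.mem_ker] at hd ⊢
    rw [degMap_mapDomain]
    exact hd⟩

/-- The degree-zero divisor `[a] - [b]`. -/
def divOf (a b : P1) : ↥Delta0 :=
  ⟨Finsupp.single a 1 - Finsupp.single b 1, by
    simp only [Delta0, AddMonoidHom.mem_ker]
    rw [map_sub]
    simp [degMap, Finsupp.liftAddHom_apply_single]⟩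

/-! If `Φ` is invariant, the symbol `{a, b} = Φ([a] - [b])` is additive along chains, so for `γ`
fixing `s` we get `h(γ) = {γ⁻¹x₀, γ⁻¹s} + {s, x₀} = {x₀, s} + {s, x₀} = 0`. Conversely, if `h`
kills every stabilizer, choose a representative `r` of each orbit and put `ψ(g • r) = -h(g)`;
this is well defined and satisfies `h(γ) = ψ(x) - ψ(γ • x)`. Then `Φ(d) = ∑ d(s) ψ(s)` works:
`γ` shifts `ψ` by the constant `h(γ)`, which a divisor of degree zero does not see. -/

open Finsupp
open scoped MatrixGroups

section Primitive

variable {G X A : Type*} [Group G] [MulAction G X] [AddCommGroup A] {h : G → A}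

lemma eq_of_smul_eq_smul_of_vanishes_on_stabilizers
    (hhom : ∀ g₁ g₂, h (g₁ * g₂) = h g₁ + h g₂) (hstab : ∀ (x : X) (g : G), g • x = x → h g = 0)
    {g g' : G} {y : X} (hy : g • y = g' • y) : h g = h g' := by
  have hfix : (g'⁻¹ * g) • y = y := by rw [mul_smul, hy, inv_smul_smul]
  rw [← mul_inv_cancel_left g' g, hhom, hstab y _ hfix, add_zero]

theorem exists_hom_eq_sub_smul_of_vanishes_on_stabilizers
    (hhom : ∀ g₁ g₂, h (g₁ * g₂) = h g₁ + h g₂) (hstab : ∀ (x : X) (g : G), g • x = x → h g = 0) :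
    ∃ ψ : X → A, ∀ (g : G) (x : X), h g = ψ x - ψ (g • x) := by
  let rep : X → X := fun x => (Quotient.mk (MulAction.orbitRel G X) x).out
  have rep_smul : ∀ (g : G) x, rep (g • x) = rep x := fun g x =>
    congrArg Quotient.out (Quotient.sound (MulAction.mem_orbit x g))
  have exists_smul_rep : ∀ x, ∃ g : G, g • rep x = x := fun x => by
    obtain ⟨g, hg⟩ := Quotient.mk_out (s := MulAction.orbitRel G X) x
    exact ⟨g⁻¹, inv_smul_eq_iff.2 hg.symm⟩
  choose k hk using exists_smul_rep
  refine ⟨fun x => -h (k x), fun g x => ?_⟩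
  have hk_smul : h (k (g • x)) = h (g * k x) :=
    eq_of_smul_eq_smul_of_vanishes_on_stabilizers hhom hstab (y := rep x)
      (by rw [mul_smul, hk, ← rep_smul g x, hk])
  show h g = -h (k x) - -h (k (g • x))
  rw [hk_smul, hhom]
  abel

end Primitive

lemma smulP1_one (x : P1) : smulP1 1 x = x := by
  induction x using Projectivization.ind with
  | h v hv => simp [smulP1, Projectivization.map_mk]

lemma smulP1_mul (g₁ g₂ : SL(2, ℤ)) (x : P1) :
    smulP1 (g₁ * g₂) x = smulP1 g₁ (smulP1 g₂ x) := by
  induction x using Projectivization.ind with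
  | h v hv => simp [smulP1, Projectivization.map_mk]

instance : MulAction SL(2, ℤ) P1 where
  smul := smulP1
  one_smul := smulP1_one
  mul_smul := smulP1_mul

lemma smul_eq_smulP1 (g : SL(2, ℤ)) (x : P1) : g • x = smulP1 g x :=
  rfl

lemma divOf_add_divOf (a b c : P1) : divOf a b + divOf b c = divOf a c :=
  Subtype.ext (sub_add_sub_cancel _ _ _)

lemma divOf_self (a : P1) : divOf a a = 0 :=
  Subtype.ext (sub_self _)

lemma smulDelta0_divOf (g : SL(2, ℤ)) (a b : P1) :
    smulDelta0 g (divOf a b) = divOf (g • a) (g • b) :=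
  Subtype.ext <| by simp [smulDelta0, divOf, mapDomain_sub, smul_eq_smulP1]

theorem map_divOf_smul_eq_zero_of_smul_eq {A : Type*} [AddMonoid A] (Φ : ↥Delta0 →+ A)
    {g : SL(2, ℤ)} (hΦ : ∀ d, Φ (smulDelta0 g d) = Φ d) {s : P1} (hs : g • s = s) (x₀ : P1) :
    Φ (divOf (g • x₀) x₀) = 0 :=
  calc Φ (divOf (g • x₀) x₀) = Φ (smulDelta0 g (divOf x₀ s)) + Φ (divOf s x₀) := by
        rw [smulDelta0_divOf, hs, ← map_add, divOf_add_divOf]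
    _ = Φ (divOf x₀ s + divOf s x₀) := by rw [hΦ, map_add]
    _ = 0 := by rw [divOf_add_divOf, divOf_self, map_zero]

section LinearCombination

variable {A : Type*} [AddCommGroup A]

lemma linearCombination_sub_const_of_mem_Delta0 (ψ : P1 → A) (c : A) {d : P1 →₀ ℤ}
    (hd : d ∈ Delta0) :
    linearCombination ℤ (fun s => ψ s - c) d = linearCombination ℤ ψ d := by
  have hdeg : d.sum (fun _ n => n) = 0 := hd
  simp only [linearCombination_apply, smul_sub, sum_sub]
  rw [sub_eq_self, Finsupp.sum, ← Finset.sum_smul]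
  exact (congrArg (· • c) hdeg).trans (zero_smul ℤ c)

lemma linearCombination_divOf (ψ : P1 → A) (a b : P1) :
    linearCombination ℤ ψ (divOf a b : P1 →₀ ℤ) = ψ a - ψ b := by
  simp [divOf]

lemma linearCombination_smulDelta0_of_forall_smul_eq_sub {ψ : P1 → A} {g : SL(2, ℤ)} {c : A}
    (hψ : ∀ x, ψ (g • x) = ψ x - c) (d : ↥Delta0) :
    linearCombination ℤ ψ (smulDelta0 g d : P1 →₀ ℤ) = linearCombination ℤ ψ d := by
  rw [smulDelta0, linearCombination_mapDomain]
  simp only [Function.comp_def, ← smul_eq_smulP1, hψ]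
  exact linearCombination_sub_const_of_mem_Delta0 ψ c d.2

end LinearCombination

theorem hom_eq_modularSymbol_cocycle_iff_vanishes_on_stabilizers_general
    (N : ℕ) (x₀ : P1)
    (h : ↥(CongruenceSubgroup.Gamma0 N) → ℚ)
    (hhom : ∀ γ₁ γ₂ : ↥(CongruenceSubgroup.Gamma0 N), h (γ₁ * γ₂) = h γ₁ + h γ₂) :
    (∃ Φ : ↥Delta0 →+ ℚ,
        (∀ γ ∈ CongruenceSubgroup.Gamma0 N, ∀ d : ↥Delta0, Φ (smulDelta0 γ d) = Φ d) ∧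
        (∀ γ : ↥(CongruenceSubgroup.Gamma0 N), h γ = Φ (divOf (smulP1 (↑γ)⁻¹ x₀) x₀))) ↔
      (∀ s : P1, ∀ γ : ↥(CongruenceSubgroup.Gamma0 N), smulP1 ↑γ s = s → h γ = 0) := by
  constructor
  · rintro ⟨Φ, hΦ, hh⟩ s γ hs
    rw [hh γ]
    exact map_divOf_smul_eq_zero_of_smul_eq Φ (hΦ _ (inv_mem γ.2)) (inv_smul_eq_iff.2 hs.symm) x₀
  · intro hstab
    obtain ⟨ψ, hψ⟩ := exists_hom_eq_sub_smul_of_vanishes_on_stabilizers hhom hstab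
    refine ⟨(linearCombination ℤ ψ).toAddMonoidHom.comp Delta0.subtype,
      fun γ hγ d => ?_, fun γ => ?_⟩
    · refine linearCombination_smulDelta0_of_forall_smul_eq_sub (c := h ⟨γ, hγ⟩) (fun x => ?_) d
      rw [hψ ⟨γ, hγ⟩ x, sub_sub_cancel]
      rfl
    · have hx₀ : γ • smulP1 (↑γ)⁻¹ x₀ = x₀ := smul_inv_smul (γ : SL(2, ℤ)) x₀
      simp [hψ γ (smulP1 (↑γ)⁻¹ x₀), hx₀, linearCombination_divOf]

/-- a group homomorphism `h : Γ₀(N) → ℚ` comes from an additive,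
`Γ₀(N)`-invariant map `Φ : Δ₀ → ℚ` via `h(γ) = Φ([γ⁻¹·x₀] - [x₀])` if and only if `h`
vanishes on the stabilizer in `Γ₀(N)` of every point of `ℙ¹(ℚ)`. -/
theorem hom_eq_modularSymbol_cocycle_iff_vanishes_on_stabilizers
    (N : ℕ) (hN : 0 < N) (x₀ : P1)
    (h : ↥(CongruenceSubgroup.Gamma0 N) → ℚ)
    (hhom : ∀ γ₁ γ₂ : ↥(CongruenceSubgroup.Gamma0 N), h (γ₁ * γ₂) = h γ₁ + h γ₂) :
    (∃ Φ : ↥Delta0 →+ ℚ,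
        (∀ γ ∈ CongruenceSubgroup.Gamma0 N, ∀ d : ↥Delta0, Φ (smulDelta0 γ d) = Φ d) ∧
        (∀ γ : ↥(CongruenceSubgroup.Gamma0 N), h γ = Φ (divOf (smulP1 (↑γ)⁻¹ x₀) x₀))) ↔
      (∀ s : P1, ∀ γ : ↥(CongruenceSubgroup.Gamma0 N), smulP1 ↑γ s = s → h γ = 0) :=
  hom_eq_modularSymbol_cocycle_iff_vanishes_on_stabilizers_general N x₀ h hhom

end
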